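/- arXiv:0809.2018 — 2 statements merged into one kernel-verified Lean document; each statement's English description precedes it below -/
import Mathlib

section
/- The coefficients c^k_{ij} form a tensor of type (1,2) on the submanifold: if φ : V → U is a smooth diffeomorphism between open subsets of ℝ^N with inverse ψ = φ^{-1}, and c'^k_{ij} are the coefficients in the Weingarten decomposition of the reparametrized pair (r∘φ, n∘φ), then c'^k_{ij}(v) = Σ_{m,p,q} (∂ψ^k/∂u^m)(φ(v)) (∂φ^p/∂v^i)(v) (∂φ^q/∂v^j)(v) c^m_{pq}(φ(v)) for all v ∈ V. -/
/-- Partial derivative in the `i`-th coordinate direction. -/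
noncomputable def pd {N : ℕ} {E : Type*} [NormedAddCommGroup E] [NormedSpace ℝ E]
    (i : Fin N) (f : (Fin N → ℝ) → E) (u : Fin N → ℝ) : E :=
  fderiv ℝ f u (Pi.single i 1)

/-- The pseudo-Euclidean scalar product `B(x,y) = xᵀ G y` on `ℝ^m`. -/
def Bform {m : ℕ} (G : Matrix (Fin m) (Fin m) ℝ) (x y : Fin m → ℝ) : ℝ :=
  ∑ i, ∑ j, x i * G i j * y j

lemma clm_apply_eq_sum {N : ℕ} {E : Type*} [NormedAddCommGroup E] [NormedSpace ℝ E]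
    (L : (Fin N → ℝ) →L[ℝ] E) (x : Fin N → ℝ) :
    L x = ∑ q, x q • L (Pi.single q 1) := by
  conv_lhs => rw [← Finset.univ_sum_single x, map_sum]
  refine Finset.sum_congr rfl fun q _ => ?_
  rw [← L.map_smul]
  congr 1
  rw [← Pi.single_smul, smul_eq_mul, mul_one]

lemma pd_congr {N : ℕ} {E : Type*} [NormedAddCommGroup E] [NormedSpace ℝ E]
    {f g : (Fin N → ℝ) → E} {s : Set (Fin N → ℝ)} (hs : IsOpen s)
    (h : ∀ x ∈ s, f x = g x) {v : Fin N → ℝ} (hv : v ∈ s) (i : Fin N) :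
    pd i f v = pd i g v := by
  unfold pd
  rw [Filter.EventuallyEq.fderiv_eq (by filter_upwards [hs.mem_nhds hv] with x hx using h x hx)]

lemma pd_comp {N : ℕ} {E : Type*} [NormedAddCommGroup E] [NormedSpace ℝ E]
    {f : (Fin N → ℝ) → E} {φ : (Fin N → ℝ) → (Fin N → ℝ)} {v : Fin N → ℝ}
    (hf : DifferentiableAt ℝ f (φ v)) (hφ : DifferentiableAt ℝ φ v) (j : Fin N) :
    pd j (fun w => f (φ w)) v = ∑ q, pd j φ v q • pd q f (φ v) := by
  unfold pd
  have h : (fun w => f (φ w)) = f ∘ φ := rfl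
  rw [h, fderiv_comp v hf hφ, ContinuousLinearMap.comp_apply]
  exact clm_apply_eq_sum _ _

lemma pd_smoothOn {N : ℕ} {E : Type*} [NormedAddCommGroup E] [NormedSpace ℝ E]
    {f : (Fin N → ℝ) → E} {s : Set (Fin N → ℝ)} (hs : IsOpen s)
    (hf : ContDiffOn ℝ (⊤ : ℕ∞) f s) (i : Fin N) :
    ContDiffOn ℝ (⊤ : ℕ∞) (fun x => pd i f x) s := by
  have h1 : ContDiffOn ℝ (⊤ : ℕ∞) (fun x => fderiv ℝ f x) s := hf.fderiv_of_isOpen hs (by simp)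
  exact h1.clm_apply contDiffOn_const

lemma pd_sum {N : ℕ} {E : Type*} [NormedAddCommGroup E] [NormedSpace ℝ E]
    {g : Fin N → (Fin N → ℝ) → E} {v : Fin N → ℝ}
    (hg : ∀ q, DifferentiableAt ℝ (g q) v) (i : Fin N) :
    pd i (fun w => ∑ q, g q w) v = ∑ q, pd i (g q) v := by
  unfold pd
  rw [fderiv_fun_sum (fun q _ => hg q)]
  exact ContinuousLinearMap.sum_apply _ _ _

lemma pd_smul {N : ℕ} {E : Type*} [NormedAddCommGroup E] [NormedSpace ℝ E]
    {a : (Fin N → ℝ) → ℝ} {b : (Fin N → ℝ) → E} {v : Fin N → ℝ}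
    (ha : DifferentiableAt ℝ a v) (hb : DifferentiableAt ℝ b v) (i : Fin N) :
    pd i (fun w => a w • b w) v = pd i a v • b v + a v • pd i b v := by
  unfold pd
  rw [fderiv_fun_smul ha hb]
  simp [ContinuousLinearMap.smulRight_apply]
  ring_nf
  rw [add_comm]

lemma sum_rot {N : ℕ} {M : Type*} [AddCommMonoid M] (f : Fin N → Fin N → Fin N → M) :
    ∑ q, ∑ p, ∑ m, f q p m = ∑ m, ∑ q, ∑ p, f q p m :=
  (Finset.sum_congr rfl fun _ _ => Finset.sum_comm).trans Finset.sum_comm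

lemma regroup1 {N : ℕ} {E : Type*} [AddCommGroup E] [Module ℝ E]
    (α β γ : Fin N → ℝ) (C D : Fin N → Fin N → Fin N → ℝ) (R S : Fin N → E) :
    ∑ q, (α q • S q + β q • ∑ p, γ p • ((∑ m, C p q m • R m) + ∑ m, D p q m • S m))
      = (∑ m, (∑ q, ∑ p, β q * γ p * C p q m) • R m)
        + ∑ m, (α m + ∑ q, ∑ p, β q * γ p * D p q m) • S m := by
  simp only [smul_add, Finset.smul_sum, smul_smul, Finset.sum_add_distrib, add_smul,
    Finset.sum_smul, mul_assoc]
  rw [sum_rot (f := fun q p m => (β q * (γ p * C p q m)) • R m),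
      sum_rot (f := fun q p m => (β q * (γ p * D p q m)) • S m)]
  abel

lemma regroup2 {N : ℕ} {E : Type*} [AddCommGroup E] [Module ℝ E]
    (a b : Fin N → ℝ) (e : Fin N → Fin N → ℝ) (R S : Fin N → E) :
    ((∑ k, a k • ∑ m, e k m • R m) + ∑ k, b k • ∑ m, e k m • S m)
      = (∑ m, (∑ k, a k * e k m) • R m) + ∑ m, (∑ k, b k * e k m) • S m := by
  simp only [Finset.smul_sum, smul_smul, Finset.sum_smul]
  exact congrArg₂ (· + ·) Finset.sum_comm Finset.sum_comm

lemma coeff_unique {N : ℕ} {E : Type*} [AddCommGroup E] [Module ℝ E]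
    {R S : Fin N → E} (hli : LinearIndependent ℝ (Sum.elim R S))
    {g₁ h₁ g₂ h₂ : Fin N → ℝ}
    (heq : ((∑ m, g₁ m • R m) + ∑ m, h₁ m • S m) = (∑ m, g₂ m • R m) + ∑ m, h₂ m • S m)
    (m : Fin N) : g₁ m = g₂ m := by
  have key := Fintype.linearIndependent_iff.mp hli
    (Sum.elim (fun m => g₁ m - g₂ m) (fun m => h₁ m - h₂ m)) ?_ (Sum.inl m)
  · simpa [sub_eq_zero] using key
  · rw [Fintype.sum_sum_type]
    simp only [Sum.elim_inl, Sum.elim_inr, sub_smul]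
    rw [Finset.sum_sub_distrib, Finset.sum_sub_distrib, sub_add_sub_comm]
    exact sub_eq_zero_of_eq heq

/-- `X^k_{ij}` is written `X i j k`. -/
theorem stmt7
    (N : ℕ) (hN : 1 ≤ N)
    (G : Matrix (Fin (2 * N)) (Fin (2 * N)) ℝ)
    (hGsymm : G.transpose = G) (hGdet : G.det ≠ 0)
    (U V : Set (Fin N → ℝ)) (hU : IsOpen U) (hV : IsOpen V)
    (r n : (Fin N → ℝ) → (Fin (2 * N) → ℝ))
    (hr : ContDiffOn ℝ (⊤ : ℕ∞) r U) (hn : ContDiffOn ℝ (⊤ : ℕ∞) n U)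
    (hbasis : ∀ u ∈ U,
      LinearIndependent ℝ (Sum.elim (fun i : Fin N => pd i r u) (fun j : Fin N => pd j n u)) ∧
      Submodule.span ℝ
        (Set.range (Sum.elim (fun i : Fin N => pd i r u) (fun j : Fin N => pd j n u))) = ⊤)
    (horth : ∀ u ∈ U, ∀ i j : Fin N, Bform G (pd i r u) (pd j n u) = 0)
    -- Weingarten decomposition on U
    (c d : Fin N → Fin N → Fin N → (Fin N → ℝ) → ℝ)
    (hWeingarten : ∀ u ∈ U, ∀ i j : Fin N,
      pd i (pd j n) u =
        (∑ k, c i j k u • pd k r u) + ∑ k, d i j k u • pd k n u)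
    -- φ : V → U is a smooth diffeomorphism with smooth inverse ψ
    (φ ψ : (Fin N → ℝ) → (Fin N → ℝ))
    (hφ : ContDiffOn ℝ (⊤ : ℕ∞) φ V) (hψ : ContDiffOn ℝ (⊤ : ℕ∞) ψ U)
    (hφV : Set.MapsTo φ V U) (hψU : Set.MapsTo ψ U V)
    (hleft : ∀ v ∈ V, ψ (φ v) = v) (hright : ∀ u ∈ U, φ (ψ u) = u)
    -- Weingarten decomposition of the reparametrized pair (r ∘ φ, n ∘ φ) on V
    (c' d' : Fin N → Fin N → Fin N → (Fin N → ℝ) → ℝ)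
    (hWeingarten' : ∀ v ∈ V, ∀ i j : Fin N,
      pd i (pd j (n ∘ φ)) v =
        (∑ k, c' i j k v • pd k (r ∘ φ) v) + ∑ k, d' i j k v • pd k (n ∘ φ) v) :
    ∀ v ∈ V, ∀ i j k : Fin N,
      c' i j k v =
        ∑ m, ∑ p, ∑ q,
          pd m ψ (φ v) k * pd i φ v p * pd j φ v q * c p q m (φ v) := by
  intro v hv i j k
  have hu : φ v ∈ U := hφV hv
  set u := φ v with hudef
  -- differentiability facts
  have hφv : DifferentiableAt ℝ φ v := (hφ.contDiffAt (hV.mem_nhds hv)).differentiableAt (by simp)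
  have hrd : DifferentiableAt ℝ r u := (hr.contDiffAt (hU.mem_nhds hu)).differentiableAt (by simp)
  have hnd : DifferentiableAt ℝ n u := (hn.contDiffAt (hU.mem_nhds hu)).differentiableAt (by simp)
  have hψd : DifferentiableAt ℝ ψ u := (hψ.contDiffAt (hU.mem_nhds hu)).differentiableAt (by simp)
  have hnq : ∀ q : Fin N, DifferentiableAt ℝ (pd q n) u := fun q =>
    ((pd_smoothOn hU hn q).contDiffAt (hU.mem_nhds hu)).differentiableAt (by simp)
  have haq : ∀ q : Fin N, DifferentiableAt ℝ (fun w => pd j φ w q) v := fun q =>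
    differentiableAt_pi.mp
      (((pd_smoothOn hV hφ j).contDiffAt (hV.mem_nhds hv)).differentiableAt (by simp)) q
  have hbq : ∀ q : Fin N, DifferentiableAt ℝ (fun w => pd q n (φ w)) v := fun q =>
    (hnq q).comp v hφv
  have hgq : ∀ q : Fin N, DifferentiableAt ℝ (fun w => pd j φ w q • pd q n (φ w)) v := fun q =>
    (haq q).smul (hbq q)
  -- chain rule for pd j (n ∘ φ) on V
  have hnφ : ∀ w ∈ V, pd j (n ∘ φ) w = ∑ q, pd j φ w q • pd q n (φ w) := fun w hw =>
    pd_comp ((hn.contDiffAt (hU.mem_nhds (hφV hw))).differentiableAt (by simp))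
      ((hφ.contDiffAt (hV.mem_nhds hw)).differentiableAt (by simp)) j
  -- splitting of each summand
  have hsplit : ∀ q : Fin N, pd i (fun w => pd j φ w q • pd q n (φ w)) v
      = pd i (fun w => pd j φ w q) v • pd q n u
        + pd j φ v q • ∑ p, pd i φ v p •
            ((∑ m, c p q m u • pd m r u) + ∑ m, d p q m u • pd m n u) := by
    intro q
    rw [pd_smul (haq q) (hbq q), pd_comp (hnq q) hφv]
    simp only [← hudef, hWeingarten u hu]
  have E1 : pd i (pd j (n ∘ φ)) v
      = (∑ m, (∑ q, ∑ p, pd j φ v q * pd i φ v p * c p q m u) • pd m r u)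
        + ∑ m, ((pd i (fun w => pd j φ w m) v)
            + ∑ q, ∑ p, pd j φ v q * pd i φ v p * d p q m u) • pd m n u := by
    calc pd i (pd j (n ∘ φ)) v
        = pd i (fun w => ∑ q, pd j φ w q • pd q n (φ w)) v := pd_congr hV hnφ hv i
      _ = ∑ q, pd i (fun w => pd j φ w q • pd q n (φ w)) v :=
          pd_sum (g := fun q w => pd j φ w q • pd q n (φ w)) hgq i
      _ = ∑ q, ((fun q => pd i (fun w => pd j φ w q) v) q • pd q n u
            + pd j φ v q • ∑ p, pd i φ v p •
              ((∑ m, c p q m u • pd m r u) + ∑ m, d p q m u • pd m n u)) :=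
          Finset.sum_congr rfl fun q _ => hsplit q
      _ = _ := regroup1 (fun q => pd i (fun w => pd j φ w q) v) (fun q => pd j φ v q)
            (fun p => pd i φ v p) (fun p q m => c p q m u) (fun p q m => d p q m u)
            (fun m => pd m r u) (fun m => pd m n u)
  have hrφ : ∀ k' : Fin N, pd k' (r ∘ φ) v = ∑ m, pd k' φ v m • pd m r u := fun k' =>
    pd_comp hrd hφv k'
  have hnφ2 : ∀ k' : Fin N, pd k' (n ∘ φ) v = ∑ m, pd k' φ v m • pd m n u := fun k' =>
    pd_comp hnd hφv k'
  have E2 : pd i (pd j (n ∘ φ)) v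
      = (∑ m, (∑ k', c' i j k' v * pd k' φ v m) • pd m r u)
        + ∑ m, (∑ k', d' i j k' v * pd k' φ v m) • pd m n u := by
    rw [hWeingarten' v hv i j]
    simp only [hrφ, hnφ2]
    exact regroup2 _ _ _ _ _
  have hA : ∀ m : Fin N, (∑ k', c' i j k' v * pd k' φ v m)
      = ∑ q, ∑ p, pd j φ v q * pd i φ v p * c p q m u := fun m =>
    coeff_unique (hbasis u hu).1 (E2.symm.trans E1) m
  have hJac : ∀ k' : Fin N, (∑ m, pd m ψ u k * pd k' φ v m) = if k = k' then 1 else 0 := by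
    intro k'
    have h1 : pd k' (fun w => ψ (φ w)) v = ∑ m, pd k' φ v m • pd m ψ u := pd_comp hψd hφv k'
    have h2 : pd k' (fun w => ψ (φ w)) v = pd k' (fun w => w) v :=
      pd_congr hV (fun x hx => hleft x hx) hv k'
    have h3 : pd k' (fun w : Fin N → ℝ => w) v = Pi.single k' (1:ℝ) := by
      unfold pd; rw [fderiv_id']; rfl
    have h5 : (∑ m, pd k' φ v m • pd m ψ u) = Pi.single k' (1:ℝ) :=
      (h2.symm.trans h1).symm.trans h3
    calc ∑ m, pd m ψ u k * pd k' φ v m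
        = (∑ m, pd k' φ v m • pd m ψ u) k := by
          rw [Finset.sum_apply]
          exact Finset.sum_congr rfl fun m _ => by simp [mul_comm]
      _ = if k = k' then 1 else 0 := by rw [h5]; simp [Pi.single_apply]
  calc c' i j k v
      = ∑ k', (if k = k' then 1 else 0) * c' i j k' v := by simp
    _ = ∑ k', (∑ m, pd m ψ u k * pd k' φ v m) * c' i j k' v :=
        Finset.sum_congr rfl fun k' _ => by rw [hJac k']
    _ = ∑ m, pd m ψ u k * ∑ k', c' i j k' v * pd k' φ v m := by
        simp only [Finset.sum_mul, Finset.mul_sum]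
        rw [Finset.sum_comm]
        exact Finset.sum_congr rfl fun m _ => Finset.sum_congr rfl fun k' _ => by ring
    _ = ∑ m, pd m ψ u k * ∑ q, ∑ p, pd j φ v q * pd i φ v p * c p q m u :=
        Finset.sum_congr rfl fun m _ => by rw [hA m]
    _ = ∑ m, ∑ p, ∑ q, pd m ψ u k * pd i φ v p * pd j φ v q * c p q m u := by
        refine Finset.sum_congr rfl fun m _ => ?_
        simp only [Finset.mul_sum]
        rw [Finset.sum_comm]
        exact Finset.sum_congr rfl fun p _ => Finset.sum_congr rfl fun q _ => by ring
end

section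
/- (Codazzi equations from the Gauss decomposition.) Under the setup of a submanifold with potential of normals, the equality of mixed third partial derivatives of r implies, for all indices i,j,l,k and all u ∈ U: ∂b^k_{ij}/∂u^l − ∂b^k_{il}/∂u^j + Σ_s ( a^s_{ij} b^k_{sl} − a^s_{il} b^k_{sj} ) + Σ_s ( b^s_{ij} d^k_{sl} − b^s_{il} d^k_{sj} ) = 0. -/
section helpers
variable {N : ℕ} {E : Type*} [NormedAddCommGroup E] [NormedSpace ℝ E]
  {U : Set (Fin N → ℝ)} {u : Fin N → ℝ}

theorem pd_congr_s9 {f g : (Fin N → ℝ) → E} (hU : IsOpen U) (hu : u ∈ U)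
    (h : ∀ x ∈ U, f x = g x) (i : Fin N) : pd i f u = pd i g u := by
  unfold pd
  rw [Filter.EventuallyEq.fderiv_eq (Filter.eventually_of_mem (hU.mem_nhds hu) h)]

theorem pd_contDiffOn {f : (Fin N → ℝ) → E} (hU : IsOpen U)
    (hf : ContDiffOn ℝ (⊤ : ℕ∞) f U) (i : Fin N) : ContDiffOn ℝ (⊤ : ℕ∞) (pd i f) U :=
  (hf.fderiv_of_isOpen hU (by simp)).clm_apply contDiffOn_const

theorem pd_diffAt {f : (Fin N → ℝ) → E} (hU : IsOpen U) (hu : u ∈ U)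
    (hf : ContDiffOn ℝ (⊤ : ℕ∞) f U) (i : Fin N) : DifferentiableAt ℝ (pd i f) u :=
  (((pd_contDiffOn hU hf i).contDiffAt (hU.mem_nhds hu)).differentiableAt (by simp))

theorem pd_comm {f : (Fin N → ℝ) → E} (hU : IsOpen U) (hu : u ∈ U)
    (hf : ContDiffOn ℝ (⊤ : ℕ∞) f U) (i j : Fin N) :
    pd i (pd j f) u = pd j (pd i f) u := by
  have hat : ContDiffAt ℝ (⊤ : ℕ∞) f u := hf.contDiffAt (hU.mem_nhds hu)
  have hsymm := hat.isSymmSndFDerivAt (by rw [minSmoothness_of_isRCLikeNormedField]; exact WithTop.coe_le_coe.2 le_top)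
  have hfd : DifferentiableAt ℝ (fderiv ℝ f) u :=
    (hat.fderiv_right (m := 1) (by exact WithTop.coe_le_coe.2 le_top)).differentiableAt one_ne_zero
  have h1 : ∀ (v w : Fin N → ℝ), fderiv ℝ (fun x => fderiv ℝ f x v) u w
      = fderiv ℝ (fderiv ℝ f) u w v := by
    intro v w
    rw [fderiv_clm_apply hfd (differentiableAt_const v)]
    simp
  show fderiv ℝ (pd j f) u (Pi.single i 1) = fderiv ℝ (pd i f) u (Pi.single j 1)
  unfold pd
  rw [h1, h1, hsymm.eq]

theorem pd_add {f g : (Fin N → ℝ) → E} (hf : DifferentiableAt ℝ f u)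
    (hg : DifferentiableAt ℝ g u) (i : Fin N) :
    pd i (fun x => f x + g x) u = pd i f u + pd i g u := by
  unfold pd; rw [fderiv_fun_add hf hg]; simp

theorem pd_sum_s9 {ι : Type*} {s : Finset ι} {F : ι → (Fin N → ℝ) → E}
    (h : ∀ k ∈ s, DifferentiableAt ℝ (F k) u) (i : Fin N) :
    pd i (fun x => ∑ k ∈ s, F k x) u = ∑ k ∈ s, pd i (F k) u := by
  unfold pd; rw [fderiv_fun_sum h]; simp

theorem pd_smul_s9 {c : (Fin N → ℝ) → ℝ} {f : (Fin N → ℝ) → E}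
    (hc : DifferentiableAt ℝ c u) (hf : DifferentiableAt ℝ f u) (i : Fin N) :
    pd i (fun x => c x • f x) u = pd i c u • f u + c u • pd i f u := by
  unfold pd; rw [fderiv_fun_smul hc hf]; simp [add_comm]

theorem sum_swap_smul {N : ℕ} {M : Type*} [AddCommMonoid M] [Module ℝ M]
    (f : Fin N → Fin N → ℝ) (v : Fin N → M) :
    ∑ s : Fin N, ∑ m : Fin N, f s m • v m = ∑ m : Fin N, (∑ s : Fin N, f s m) • v m := by
  rw [Finset.sum_comm]
  simp [Finset.sum_smul]

end helpers

/-- `X^k_{ij}` is written `X i j k`.  Codazzi equations. -/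
theorem stmt9
    (N : ℕ) (hN : 1 ≤ N)
    (G : Matrix (Fin (2 * N)) (Fin (2 * N)) ℝ)
    (hGsymm : G.transpose = G) (hGdet : G.det ≠ 0)
    (U : Set (Fin N → ℝ)) (hU : IsOpen U)
    (r n : (Fin N → ℝ) → (Fin (2 * N) → ℝ))
    (hr : ContDiffOn ℝ (⊤ : ℕ∞) r U) (hn : ContDiffOn ℝ (⊤ : ℕ∞) n U)
    (hbasis : ∀ u ∈ U,
      LinearIndependent ℝ (Sum.elim (fun i : Fin N => pd i r u) (fun j : Fin N => pd j n u)) ∧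
      Submodule.span ℝ
        (Set.range (Sum.elim (fun i : Fin N => pd i r u) (fun j : Fin N => pd j n u))) = ⊤)
    (horth : ∀ u ∈ U, ∀ i j : Fin N, Bform G (pd i r u) (pd j n u) = 0)
    (a b c d : Fin N → Fin N → Fin N → (Fin N → ℝ) → ℝ)
    (hsmooth : ∀ i j k : Fin N,
      ContDiffOn ℝ (⊤ : ℕ∞) (a i j k) U ∧ ContDiffOn ℝ (⊤ : ℕ∞) (b i j k) U ∧
      ContDiffOn ℝ (⊤ : ℕ∞) (c i j k) U ∧ ContDiffOn ℝ (⊤ : ℕ∞) (d i j k) U)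
    (hGauss : ∀ u ∈ U, ∀ i j : Fin N,
      pd i (pd j r) u =
        (∑ k, a i j k u • pd k r u) + ∑ k, b i j k u • pd k n u)
    (hWeingarten : ∀ u ∈ U, ∀ i j : Fin N,
      pd i (pd j n) u =
        (∑ k, c i j k u • pd k r u) + ∑ k, d i j k u • pd k n u) :
    ∀ u ∈ U, ∀ i j l k : Fin N,
      pd l (b i j k) u - pd j (b i l k) u
        + (∑ s, (a i j s u * b s l k u - a i l s u * b s j k u))
        + (∑ s, (b i j s u * d s l k u - b i l s u * d s j k u)) = 0 := by
  intro u hu i j l k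
  -- differentiability at u
  have hmem := hU.mem_nhds hu
  have ha : ∀ p q m : Fin N, DifferentiableAt ℝ (a p q m) u := fun p q m =>
    ((hsmooth p q m).1.contDiffAt hmem).differentiableAt (by simp)
  have hb : ∀ p q m : Fin N, DifferentiableAt ℝ (b p q m) u := fun p q m =>
    ((hsmooth p q m).2.1.contDiffAt hmem).differentiableAt (by simp)
  have hpr : ∀ m : Fin N, DifferentiableAt ℝ (pd m r) u := fun m => pd_diffAt hU hu hr m
  have hpn : ∀ m : Fin N, DifferentiableAt ℝ (pd m n) u := fun m => pd_diffAt hU hu hn m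
  -- expansion of the third derivative
  have E : ∀ q p : Fin N,
      pd p (pd i (pd q r)) u
      = (∑ m, (pd p (a i q m) u + (∑ s, a i q s u * a s p m u)
            + (∑ s, b i q s u * c s p m u)) • pd m r u)
      + ∑ m, (pd p (b i q m) u + (∑ s, a i q s u * b s p m u)
            + (∑ s, b i q s u * d s p m u)) • pd m n u := by
    intro q p
    have dA : ∀ s : Fin N, DifferentiableAt ℝ (fun x => a i q s x • pd s r x) u :=
      fun s => (ha i q s).smul (hpr s)
    have dB : ∀ s : Fin N, DifferentiableAt ℝ (fun x => b i q s x • pd s n x) u :=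
      fun s => (hb i q s).smul (hpn s)
    have h1 : pd p (pd i (pd q r)) u
        = pd p (fun x => (∑ s, a i q s x • pd s r x) + ∑ s, b i q s x • pd s n x) u :=
      pd_congr_s9 hU hu (fun x hx => hGauss x hx i q) p
    rw [h1, pd_add (DifferentiableAt.fun_sum fun s _ => dA s) (DifferentiableAt.fun_sum fun s _ => dB s),
      pd_sum_s9 (fun s _ => dA s), pd_sum_s9 (fun s _ => dB s)]
    have hA : ∀ s : Fin N, pd p (fun x => a i q s x • pd s r x) u
        = pd p (a i q s) u • pd s r u
          + a i q s u • ((∑ m, a s p m u • pd m r u) + ∑ m, b s p m u • pd m n u) := by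
      intro s
      rw [pd_smul_s9 (ha i q s) (hpr s), pd_comm hU hu hr p s, hGauss u hu s p]
    have hB : ∀ s : Fin N, pd p (fun x => b i q s x • pd s n x) u
        = pd p (b i q s) u • pd s n u
          + b i q s u • ((∑ m, c s p m u • pd m r u) + ∑ m, d s p m u • pd m n u) := by
      intro s
      rw [pd_smul_s9 (hb i q s) (hpn s), pd_comm hU hu hn p s, hWeingarten u hu s p]
    simp only [hA, hB, smul_add, Finset.smul_sum, smul_smul, Finset.sum_add_distrib,
      add_smul, Finset.sum_smul]
    rw [sum_swap_smul (fun s m => a i q s u * a s p m u) (fun m => pd m r u),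
      sum_swap_smul (fun s m => a i q s u * b s p m u) (fun m => pd m n u),
      sum_swap_smul (fun s m => b i q s u * c s p m u) (fun m => pd m r u),
      sum_swap_smul (fun s m => b i q s u * d s p m u) (fun m => pd m n u)]
    simp only [Finset.sum_smul]
    abel
  -- equality of third derivatives
  have c1 : pd l (pd i (pd j r)) u = pd j (pd i (pd l r)) u := by
    calc pd l (pd i (pd j r)) u
        = pd l (pd j (pd i r)) u :=
          pd_congr_s9 hU hu (fun x hx => pd_comm hU hx hr i j) l
      _ = pd j (pd l (pd i r)) u := pd_comm hU hu (pd_contDiffOn hU hr i) l j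
      _ = pd j (pd i (pd l r)) u :=
          pd_congr_s9 hU hu (fun x hx => pd_comm hU hx hr l i) j
  have hE := (E j l).symm.trans (c1.trans (E l j))
  -- apply linear independence
  set g : Fin N ⊕ Fin N → ℝ := Sum.elim
    (fun m => (pd l (a i j m) u + (∑ s, a i j s u * a s l m u) + (∑ s, b i j s u * c s l m u))
      - (pd j (a i l m) u + (∑ s, a i l s u * a s j m u) + (∑ s, b i l s u * c s j m u)))
    (fun m => (pd l (b i j m) u + (∑ s, a i j s u * b s l m u) + (∑ s, b i j s u * d s l m u))
      - (pd j (b i l m) u + (∑ s, a i l s u * b s j m u) + (∑ s, b i l s u * d s j m u)))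
    with hg
  have hsum : ∑ t, g t • Sum.elim (fun i : Fin N => pd i r u) (fun j : Fin N => pd j n u) t
      = 0 := by
    rw [Fintype.sum_sum_type]
    simp only [hg, Sum.elim_inl, Sum.elim_inr, sub_smul, Finset.sum_sub_distrib]
    rw [sub_add_sub_comm, sub_eq_zero, hE]
  have hzero := Fintype.linearIndependent_iff.1 (hbasis u hu).1 g (by
    simpa using hsum) (Sum.inr k)
  simp only [hg, Sum.elim_inr] at hzero
  rw [Finset.sum_sub_distrib, Finset.sum_sub_distrib]
  linarith [hzero]
end
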